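/- arXiv:1001.2034 — 2 statements merged into one kernel-verified Lean document; each statement's English description precedes it below -/
import Mathlib

section
/- Let w_1, ..., w_t be distinct natural numbers, each strictly less than 2^M. Let p_1, ..., p_l be distinct primes whose product exceeds 2^{M·t^2}. Then there exists an index k such that the residues w_1 mod p_k, ..., w_t mod p_k are pairwise distinct. -/
/-!
If no prime `p k` separates the `w i`, then every `p k` divides some difference `w i - w j` with
`i ≠ j`, hence divides the product `D` of all `t² - t` such differences. Distinct primes are
pairwise coprime, so `∏ p k ∣ D`, and `D ≠ 0` by injectivity of `w`. But each difference is
below `2^M` in absolute value, so `∏ p k ≤ D < 2^(M·t²)`, a contradiction.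
-/

open Finset Function

theorem Fintype.prod_primes_dvd {κ : Type*} [Fintype κ] {p : κ → ℕ} (hp : ∀ k, (p k).Prime)
    (hinj : Injective p) {n : ℕ} (hdvd : ∀ k, p k ∣ n) : ∏ k, p k ∣ n := by
  classical
  have himage : ∏ q ∈ univ.image p, q = ∏ k, p k := prod_image fun a _ b _ h => hinj h
  rw [← himage]
  refine Finset.prod_primes_dvd n ?_ ?_ <;> simp only [mem_image, mem_univ, true_and] <;>
    rintro _ ⟨k, rfl⟩
  exacts [(hp k).prime, hdvd k]

section PairwiseDiffProd

variable {ι : Type*} [Fintype ι] (w : ι → ℕ)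

def pairwiseDiffProd : ℕ := ∏ q ∈ univ.offDiag, ((w q.1 : ℤ) - w q.2).natAbs

variable {w}

theorem pairwiseDiffProd_pos (hw : Injective w) : 0 < pairwiseDiffProd w := by
  refine prod_pos fun q hq => Int.natAbs_pos.2 (sub_ne_zero.2 ?_)
  exact_mod_cast hw.ne (mem_offDiag.1 hq).2.2

theorem dvd_pairwiseDiffProd_of_not_injective_mod {m : ℕ} (h : ¬Injective fun i => w i % m) :
    m ∣ pairwiseDiffProd w := by
  obtain ⟨i, j, hmod, hij⟩ := not_injective_iff.1 h
  have hdiff : m ∣ ((w i : ℤ) - w j).natAbs :=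
    Int.natCast_dvd.1 (Nat.ModEq.dvd hmod.symm)
  exact hdiff.trans <| dvd_prod_of_mem (fun q : ι × ι => ((w q.1 : ℤ) - w q.2).natAbs)
    (a := (i, j)) (mem_offDiag.2 ⟨mem_univ i, mem_univ j, hij⟩)

theorem pairwiseDiffProd_le {N : ℕ} (hwN : ∀ i, w i < N) :
    pairwiseDiffProd w ≤ N ^ Fintype.card ι ^ 2 := by
  rcases isEmpty_or_nonempty ι with _ | ⟨⟨i₀⟩⟩
  · simp [pairwiseDiffProd]
  calc pairwiseDiffProd w ≤ ∏ _q ∈ univ.offDiag, N := by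
        refine prod_le_prod' fun q _ => ?_
        have := hwN q.1
        have := hwN q.2
        omega
    _ = N ^ #univ.offDiag := prod_const N
    _ ≤ N ^ Fintype.card ι ^ 2 := by
        refine Nat.pow_le_pow_right (Nat.zero_lt_of_lt (hwN i₀)) ?_
        rw [offDiag_card, card_univ, sq]
        exact Nat.sub_le _ _

end PairwiseDiffProd

theorem exists_good_prime_general {t l M : ℕ}
    (w : Fin t → ℕ) (hw : Function.Injective w) (hwlt : ∀ i, w i < 2 ^ M)
    (p : Fin l → ℕ) (hp : ∀ k, Nat.Prime (p k)) (hpinj : Function.Injective p)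
    (hprod : 2 ^ (M * t ^ 2) < ∏ k, p k) :
    ∃ k : Fin l, Function.Injective (fun i : Fin t => w i % p k) := by
  by_contra! hsep
  have hdvd : ∏ k, p k ∣ pairwiseDiffProd w := Fintype.prod_primes_dvd hp hpinj fun k =>
    dvd_pairwiseDiffProd_of_not_injective_mod (hsep k)
  have hle : pairwiseDiffProd w ≤ 2 ^ (M * t ^ 2) := by
    simpa [pow_mul] using pairwiseDiffProd_le hwlt
  exact (Nat.le_of_dvd (pairwiseDiffProd_pos hw) hdvd).trans hle |>.not_gt hprod

/-- If `w 1, ..., w t` are distinct naturals below `2^M` and `p 1, ..., p l` are distinct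
primes whose product exceeds `2^(M·t²)`, then some prime `p k` separates all the `w i`
modulo `p k`. -/
theorem exists_good_prime {t l M : ℕ} (hM : 0 < M) (ht : 0 < t) (hl : 0 < l)
    (w : Fin t → ℕ) (hw : Function.Injective w) (hwlt : ∀ i, w i < 2 ^ M)
    (p : Fin l → ℕ) (hp : ∀ k, Nat.Prime (p k)) (hpinj : Function.Injective p)
    (hprod : 2 ^ (M * t ^ 2) < ∏ k, p k) :
    ∃ k : Fin l, Function.Injective (fun i : Fin t => w i % p k) :=
  exists_good_prime_general w hw hwlt p hp hpinj hprod
end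

section
/- Let G be a DAG topologically ordered on vertices u_1, ..., u_n with m edges, and let e_1, ..., e_m enumerate the edges in the lexicographic (head, tail) order. Construct a graph H on vertices v_i^j for i ∈ {1,...,n}, j ∈ {1,...,2m}, with edges: (v_i^j, v_i^{j+1}) for all i and 1 ≤ j ≤ 2m−1, and, for each k, the edge (v_{k_1}^{2k−1}, v_{k_2}^{2k}) where e_k = (u_{k_1}, u_{k_2}). Then there is a directed path from u_1 to u_n in G if and only if there is a directed path from v_1^1 to v_n^{2m} in H. -/
def IsWalk {V : Type*} (E : V → V → Prop) (u v : V) (l : List V) : Prop :=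
  l.Chain' E ∧ l.head? = some u ∧ l.getLast? = some v

def Reach {V : Type*} (E : V → V → Prop) (u v : V) : Prop :=
  ∃ l : List V, IsWalk E u v l

/-!
A walk in `G` from `u₁` to `u_n` is simulated in `H` by riding the copy edges of the current
vertex up to the layer `2k - 1` of the next edge `e_k` of the walk and crossing to the next
vertex there. This is possible because the edges are sorted by source and `G` is topologically
sorted: after crossing `e_k = (u_a, u_c)` with `a < c`, every edge leaving `u_c` or a later vertex
comes after `e_k`, so it is still ahead in the layers. Conversely, forgetting the layer maps every
walk in `H` to a walk in `G`, since copy edges stay at the same vertex.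
-/

open Relation

theorem reach_iff_reflTransGen {V : Type*} {E : V → V → Prop} {u v : V} :
    Reach E u v ↔ ReflTransGen E u v := by
  constructor
  · rintro ⟨_ | ⟨a, l⟩, hchain, hhead, hlast⟩
    · simp at hhead
    · obtain rfl : a = u := by simpa using hhead
      exact List.relationReflTransGen_of_exists_isChain_cons l hchain
        (by simpa [List.getLast?_eq_some_getLast] using hlast)
  · intro h
    obtain ⟨l, hne, hchain, hhead, hlast⟩ := List.exists_isChain_ne_nil_of_relationReflTransGen h
    exact ⟨l, hchain, by rw [List.head?_eq_some_head hne, hhead],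
      by rw [List.getLast?_eq_some_getLast hne, hlast]⟩

def edgeListGraph {m : ℕ} (e : Fin m → ℕ × ℕ) (u v : ℕ) : Prop :=
  ∃ k, e k = (u, v)

/-- The `k`-th edge is simulated between layers `2k + 1` and `2k + 2`, the 0-indexed form
of the paper's layers `2k - 1` and `2k`. -/
def simulationGraph (n m : ℕ) (e : Fin m → ℕ × ℕ) (a b : ℕ × ℕ) : Prop :=
  (a.1 = b.1 ∧ b.2 = a.2 + 1 ∧ 1 ≤ a.1 ∧ a.1 ≤ n ∧ 1 ≤ a.2 ∧ b.2 ≤ 2 * m) ∨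
    ∃ k : Fin m, a = ((e k).1, 2 * (k : ℕ) + 1) ∧ b = ((e k).2, 2 * (k : ℕ) + 2)

section

variable {n m : ℕ} {e : Fin m → ℕ × ℕ}

theorem monotone_fst_of_lex
    (hlex : ∀ k k' : Fin m, k < k' →
      (e k).1 < (e k').1 ∨ ((e k).1 = (e k').1 ∧ (e k).2 < (e k').2)) :
    Monotone fun k => (e k).1 := by
  intro k k' hkk'
  rcases hkk'.lt_or_eq with hlt | rfl
  · rcases hlex k k' hlt with h | ⟨h, -⟩
    exacts [h.le, h.le]
  · exact le_rfl

theorem simulationGraph_reflTransGen_copy {i j j' : ℕ} (hi : 1 ≤ i) (hin : i ≤ n) (hj : 1 ≤ j)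
    (hjj' : j ≤ j') (hj' : j' ≤ 2 * m) :
    ReflTransGen (simulationGraph n m e) (i, j) (i, j') :=
  reflTransGen_of_succ_of_le (fun j j' => simulationGraph n m e (i, j) (i, j'))
    (fun l ⟨hjl, hlj'⟩ => Or.inl ⟨rfl, Order.succ_eq_add_one l, hi, hin, hj.trans hjl,
      (Order.succ_eq_add_one l).trans_le (by omega)⟩) hjj' |>.lift (Prod.mk i) fun _ _ => id

theorem edgeListGraph_reflTransGen_of_simulationGraph {a b : ℕ × ℕ}
    (h : ReflTransGen (simulationGraph n m e) a b) : ReflTransGen (edgeListGraph e) a.1 b.1 := by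
  refine h.lift' Prod.fst fun a b hab => ?_
  rcases hab with ⟨hfst, -⟩ | ⟨k, rfl, rfl⟩
  · exact show ReflTransGen _ a.1 b.1 from hfst ▸ .refl
  · exact .single ⟨k, rfl⟩

theorem simulationGraph_reflTransGen_of_edgeListGraph (hmono : Monotone fun k => (e k).1)
    (hsorted : ∀ k, (e k).1 < (e k).2) (hle : ∀ k, (e k).2 ≤ n) {u j : ℕ}
    (h : ReflTransGen (edgeListGraph e) u n) (hu : 1 ≤ u) (hun : u ≤ n) (hj : 1 ≤ j)
    (hjm : j ≤ 2 * m) (hfree : ∀ k, u ≤ (e k).1 → j ≤ 2 * (k : ℕ) + 1) :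
    ReflTransGen (simulationGraph n m e) (u, j) (n, 2 * m) := by
  induction h using ReflTransGen.head_induction_on generalizing j with
  | refl => exact simulationGraph_reflTransGen_copy hu hun hj hjm le_rfl
  | @head a c hac _ ih =>
    obtain ⟨k₀, hk₀⟩ := hac
    have hk₀m := k₀.isLt
    have hsrc : (e k₀).1 = a := by rw [hk₀]
    have htgt : (e k₀).2 = c := by rw [hk₀]
    have hk₀c := hsorted k₀
    have hle₀ := hle k₀
    have hride : ReflTransGen (simulationGraph n m e) (a, j) (a, 2 * k₀ + 1) :=
      simulationGraph_reflTransGen_copy hu hun hj (hfree k₀ hsrc.ge) (by omega)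
    have hcross : simulationGraph n m e (a, 2 * k₀ + 1) (c, 2 * k₀ + 2) :=
      Or.inr ⟨k₀, by rw [hsrc], by rw [htgt]⟩
    have hlater : ∀ k, c ≤ (e k).1 → k₀ < k := fun k hk => hmono.reflect_lt (by omega)
    refine (hride.tail hcross).trans (ih (by omega) (by omega) (by omega) (by omega) ?_)
    exact fun k hk => by have := hlater k hk; omega

end

theorem three_page_reduction_general (n m : ℕ) (hn : 1 ≤ n) (hm : 1 ≤ m)
    (e : Fin m → ℕ × ℕ)
    (hrange : ∀ k : Fin m, 1 ≤ (e k).1 ∧ (e k).1 < (e k).2 ∧ (e k).2 ≤ n)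
    (hlex : ∀ k k' : Fin m, k < k' →
      (e k).1 < (e k').1 ∨ ((e k).1 = (e k').1 ∧ (e k).2 < (e k').2))
    (E : ℕ → ℕ → Prop) (hE : ∀ u v : ℕ, E u v ↔ ∃ k : Fin m, e k = (u, v))
    (EH : ℕ × ℕ → ℕ × ℕ → Prop)
    (hEH : ∀ a b : ℕ × ℕ, EH a b ↔
      ((a.1 = b.1 ∧ b.2 = a.2 + 1 ∧ 1 ≤ a.1 ∧ a.1 ≤ n ∧ 1 ≤ a.2 ∧ b.2 ≤ 2 * m) ∨
       (∃ k : Fin m, a = ((e k).1, 2 * (k : ℕ) + 1) ∧ b = ((e k).2, 2 * (k : ℕ) + 2)))) :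
    Reach E 1 n ↔ Reach EH (1, 1) (n, 2 * m) := by
  obtain rfl : E = edgeListGraph e := by ext u v; exact hE u v
  obtain rfl : EH = simulationGraph n m e := by ext a b; exact hEH a b
  rw [reach_iff_reflTransGen, reach_iff_reflTransGen]
  refine ⟨fun h => ?_, edgeListGraph_reflTransGen_of_simulationGraph⟩
  exact simulationGraph_reflTransGen_of_edgeListGraph (monotone_fst_of_lex hlex)
    (fun k => (hrange k).2.1) (fun k => (hrange k).2.2) h le_rfl hn le_rfl (by omega)
    fun k _ => by omega

/-- The 3-page construction: reachability from `u 1` to `u n` in a topologically sorted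
DAG `G` (vertices `1, ..., n`, edges `e 1, ..., e m` in lexicographic order) is
equivalent to reachability from `v 1 1` to `v n (2m)` in the graph `H` on vertices
`(i, j)`, `1 ≤ i ≤ n`, `1 ≤ j ≤ 2m`, with copy edges `(i,j) → (i,j+1)` and, for the
`k`-th edge `e k = (k₁, k₂)` of `G`, the simulation edge `(k₁, 2k−1) → (k₂, 2k)`. -/
theorem three_page_reduction (n m : ℕ) (hn : 1 ≤ n) (hm : 1 ≤ m)
    (e : Fin m → ℕ × ℕ) (heinj : Function.Injective e)
    (hrange : ∀ k : Fin m, 1 ≤ (e k).1 ∧ (e k).1 < (e k).2 ∧ (e k).2 ≤ n)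
    (hlex : ∀ k k' : Fin m, k < k' →
      (e k).1 < (e k').1 ∨ ((e k).1 = (e k').1 ∧ (e k).2 < (e k').2))
    (E : ℕ → ℕ → Prop) (hE : ∀ u v : ℕ, E u v ↔ ∃ k : Fin m, e k = (u, v))
    (EH : ℕ × ℕ → ℕ × ℕ → Prop)
    (hEH : ∀ a b : ℕ × ℕ, EH a b ↔
      ((a.1 = b.1 ∧ b.2 = a.2 + 1 ∧ 1 ≤ a.1 ∧ a.1 ≤ n ∧ 1 ≤ a.2 ∧ b.2 ≤ 2 * m) ∨
       (∃ k : Fin m, a = ((e k).1, 2 * (k : ℕ) + 1) ∧ b = ((e k).2, 2 * (k : ℕ) + 2)))) :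
    Reach E 1 n ↔ Reach EH (1, 1) (n, 2 * m) :=
  three_page_reduction_general n m hn hm e hrange hlex E hE EH hEH
end
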